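/- Let Ψ be a locally optimal admissible marking on Z with positive weights. If k < ℓ are two sites with M_k' = M_ℓ' = '+', then the labels of all sites m ∈ [k,ℓ] are uniquely determined by the weights in a deterministic way: on each maximal block between consecutive constraints, local optimality forces the label choice maximizing the total score subject to the adjacency exclusion rule, provided all relevant comparisons among finite sums of weights are strict. -/
import Mathlib


/-- Labels for sites: `0`, `+` or `-`. -/
inductive ZMark | zero | plus | minus
deriving DecidableEq

/-- Two labels are opposite if one is `+` and the other is `-`. -/
def ZMark.opposite : ZMark → ZMark → Prop
  | ZMark.plus, ZMark.minus => True
  | ZMark.minus, ZMark.plus => True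
  | _, _ => False

/-- A marking of `ℤ` is admissible if no two adjacent sites carry opposite labels. -/
def zAdmissible (L : ℤ → ZMark) : Prop := ∀ k : ℤ, ¬ ZMark.opposite (L k) (L (k + 1))

/-- The score of site `k`: `M_k⁺` if labeled `+`, `M_k⁻` if labeled `-`, `0` if labeled `0`. -/
def zScore (Mp Mm : ℤ → ℝ) (L : ℤ → ZMark) (k : ℤ) : ℝ :=
  match L k with
  | ZMark.plus => Mp k
  | ZMark.minus => Mm k
  | ZMark.zero => 0

/-- A marking is locally optimal if changing the labels on any finite set of sites
(preserving admissibility) does not strictly increase the total score. -/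
def zLocallyOptimal (Mp Mm : ℤ → ℝ) (L : ℤ → ZMark) : Prop :=
  ∀ L' : ℤ → ZMark, zAdmissible L' →
    ∀ hfin : {k : ℤ | L' k ≠ L k}.Finite,
      ∑ k ∈ hfin.toFinset, (zScore Mp Mm L' k - zScore Mp Mm L k) ≤ 0

lemma zScore_congr (Mp Mm : ℤ → ℝ) (L L' : ℤ → ZMark) (m : ℤ) (h : L m = L' m) :
    zScore Mp Mm L m = zScore Mp Mm L' m := by
  unfold zScore; rw [h]

lemma key_le (Mp Mm : ℤ → ℝ) (L₁ L₂ : ℤ → ZMark)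
    (hadm₁ : zAdmissible L₁) (hadm₂ : zAdmissible L₂)
    (hopt₁ : zLocallyOptimal Mp Mm L₁)
    (k l : ℤ)
    (hk₁ : L₁ k = ZMark.plus) (hk₂ : L₂ k = ZMark.plus)
    (hl₁ : L₁ l = ZMark.plus) (hl₂ : L₂ l = ZMark.plus) :
    ∑ m ∈ Finset.Icc k l, zScore Mp Mm L₂ m ≤ ∑ m ∈ Finset.Icc k l, zScore Mp Mm L₁ m := by
  classical
  set L' : ℤ → ZMark := fun m => if m ∈ Finset.Icc k l then L₂ m else L₁ m with hL'
  have hadm' : zAdmissible L' := by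
    intro m
    by_cases hm : m ∈ Finset.Icc k l <;> by_cases hm1 : m + 1 ∈ Finset.Icc k l
    · simp only [L', if_pos hm, if_pos hm1]; exact hadm₂ m
    · have hml : m = l := by
        simp only [Finset.mem_Icc] at hm hm1; omega
      subst hml
      have h1 := hadm₁ m
      rw [hl₁] at h1
      simp only [L', if_pos hm, if_neg hm1, hl₂]
      exact h1
    · have hmk : m + 1 = k := by
        simp only [Finset.mem_Icc] at hm hm1; omega
      have h1 := hadm₁ m
      rw [hmk, hk₁] at h1
      simp only [L', if_neg hm, if_pos hm1]
      rw [hmk, hk₂]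
      exact h1
    · simp only [L', if_neg hm, if_neg hm1]; exact hadm₁ m
  have hsub : {m : ℤ | L' m ≠ L₁ m} ⊆ ↑(Finset.Icc k l) := by
    intro m hm
    by_contra hmem
    have hmem' : m ∉ Finset.Icc k l := by simpa using hmem
    exact hm (if_neg hmem')
  have hfin : {m : ℤ | L' m ≠ L₁ m}.Finite :=
    Set.Finite.subset (Finset.finite_toSet _) hsub
  have hopt := hopt₁ L' hadm' hfin
  have hsum : ∑ m ∈ Finset.Icc k l, (zScore Mp Mm L' m - zScore Mp Mm L₁ m)
      = ∑ m ∈ hfin.toFinset, (zScore Mp Mm L' m - zScore Mp Mm L₁ m) := by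
    refine (Finset.sum_subset ?_ ?_).symm
    · intro m hm
      exact hsub (by simpa using hm)
    · intro m _ hm
      have : L' m = L₁ m := by
        by_contra h
        exact hm (by simpa using h)
      rw [zScore_congr Mp Mm L' L₁ m this]; ring
  have heq : ∀ m ∈ Finset.Icc k l, zScore Mp Mm L' m = zScore Mp Mm L₂ m := by
    intro m hm
    exact zScore_congr Mp Mm L' L₂ m (if_pos hm)
  have h2 : ∑ m ∈ Finset.Icc k l, (zScore Mp Mm L₂ m - zScore Mp Mm L₁ m) ≤ 0 := by
    calc ∑ m ∈ Finset.Icc k l, (zScore Mp Mm L₂ m - zScore Mp Mm L₁ m)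
        = ∑ m ∈ Finset.Icc k l, (zScore Mp Mm L' m - zScore Mp Mm L₁ m) := by
          refine Finset.sum_congr rfl fun m hm => ?_
          rw [heq m hm]
      _ ≤ 0 := by rw [hsum]; exact hopt
  rw [Finset.sum_sub_distrib] at h2
  linarith

/-- If the weights are generic (all finite sums of labelled weights are pairwise distinct,
so equal total scores force equal labels), then between any two sites `k < ℓ` labelled `+`,
the labels of a locally optimal admissible marking on `[k,ℓ]` are uniquely determined:
any two locally optimal admissible markings that assign `+` to both `k` and `ℓ`
agree on all of `[k,ℓ]`. -/
theorem stmt_3 (Mp Mm : ℤ → ℝ) (hMp : ∀ k, 0 < Mp k) (hMm : ∀ k, 0 < Mm k)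
    (hgen : ∀ (F : Finset ℤ) (f g : ℤ → ZMark),
      ∑ m ∈ F, zScore Mp Mm f m = ∑ m ∈ F, zScore Mp Mm g m → ∀ m ∈ F, f m = g m)
    (L₁ L₂ : ℤ → ZMark)
    (hadm₁ : zAdmissible L₁) (hadm₂ : zAdmissible L₂)
    (hopt₁ : zLocallyOptimal Mp Mm L₁) (hopt₂ : zLocallyOptimal Mp Mm L₂)
    (k l : ℤ) (hkl : k < l)
    (hk₁ : L₁ k = ZMark.plus) (hk₂ : L₂ k = ZMark.plus)
    (hl₁ : L₁ l = ZMark.plus) (hl₂ : L₂ l = ZMark.plus) :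
    ∀ m ∈ Finset.Icc k l, L₁ m = L₂ m := by
  have h1 := key_le Mp Mm L₁ L₂ hadm₁ hadm₂ hopt₁ k l hk₁ hk₂ hl₁ hl₂
  have h2 := key_le Mp Mm L₂ L₁ hadm₂ hadm₁ hopt₂ k l hk₂ hk₁ hl₂ hl₁
  exact hgen (Finset.Icc k l) L₁ L₂ (le_antisymm h2 h1)
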